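/- arXiv:1604.05504 — 2 statements merged into one kernel-verified Lean document; each statement's English description precedes it below -/
import Mathlib

section
/- Let G be a finite CT group with trivial center. Then the maximal abelian subgroups of G form a partition of G ∖ {1} together with the identity: every nontrivial element of G lies in exactly one maximal abelian subgroup, and two distinct maximal abelian subgroups intersect trivially. -/
/-!
In a CT group with trivial centre the centralizer of any `g ≠ 1` is abelian, and every abelian
subgroup containing `g` lies in it; hence it is the unique maximal abelian subgroup containing `g`.
Two maximal abelian subgroups sharing some `g ≠ 1` are then both equal to the centralizer of `g`.
-/

/-- A subgroup is maximal abelian if it is abelian and is not properly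
contained in any abelian subgroup. -/
def IsMaxAbelian {G : Type} [Group G] (H : Subgroup G) : Prop :=
  (∀ x ∈ H, ∀ y ∈ H, x * y = y * x) ∧
  ∀ K : Subgroup G, (∀ x ∈ K, ∀ y ∈ K, x * y = y * x) → H ≤ K → K = H

open scoped commutatorElement

def IsCommTransitive (G : Type*) [Group G] : Prop :=
  ∀ a b c : G, a ≠ 1 → b ≠ 1 → c ≠ 1 → Commute a b → Commute b c → Commute a c

namespace IsCommTransitive

variable {G : Type} [Group G]

theorem of_center_eq_bot (hZ : Subgroup.center G = ⊥)
    (hCT : ∀ a b c : G, a ∉ Subgroup.center G → b ∉ Subgroup.center G →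
      c ∉ Subgroup.center G → ⁅a, b⁆ = 1 → ⁅b, c⁆ = 1 → ⁅a, c⁆ = 1) :
    IsCommTransitive G := by
  intro a b c ha hb hc hab hbc
  simp only [hZ, Subgroup.mem_bot, commutatorElement_eq_one_iff_mul_comm] at hCT
  exact hCT a b c ha hb hc hab hbc

theorem centralizer_singleton_comm (hT : IsCommTransitive G) {g : G} (hg : g ≠ 1) :
    ∀ x ∈ Subgroup.centralizer {g}, ∀ y ∈ Subgroup.centralizer {g}, x * y = y * x := by
  intro x hx y hy
  rw [Subgroup.mem_centralizer_singleton_iff] at hx hy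
  by_cases hx1 : x = 1
  · simp [hx1]
  by_cases hy1 : y = 1
  · simp [hy1]
  exact hT x g y hx1 hg hy1 hx hy.symm

theorem centralizer_singleton_isMaxAbelian (hT : IsCommTransitive G) {g : G} (hg : g ≠ 1) :
    IsMaxAbelian (Subgroup.centralizer {g}) := by
  refine ⟨hT.centralizer_singleton_comm hg, fun K hK hle => le_antisymm (fun k hk => ?_) hle⟩
  have hgK : g ∈ K := hle (Subgroup.mem_centralizer_singleton_iff.mpr rfl)
  exact Subgroup.mem_centralizer_singleton_iff.mpr (hK g hgK k hk).symm

theorem eq_centralizer_of_isMaxAbelian (hT : IsCommTransitive G) {g : G} (hg : g ≠ 1)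
    {H : Subgroup G} (hH : IsMaxAbelian H) (hgH : g ∈ H) : H = Subgroup.centralizer {g} := by
  have hle : H ≤ Subgroup.centralizer {g} := fun h hh =>
    Subgroup.mem_centralizer_singleton_iff.mpr (hH.1 g hgH h hh).symm
  exact (hH.2 _ (hT.centralizer_singleton_comm hg) hle).symm

end IsCommTransitive

theorem stmt14_general (G : Type) [Group G] (hZ : Subgroup.center G = ⊥)
    (hCT : ∀ a b c : G, a ∉ Subgroup.center G → b ∉ Subgroup.center G →
      c ∉ Subgroup.center G → ⁅a, b⁆ = 1 → ⁅b, c⁆ = 1 → ⁅a, c⁆ = 1) :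
    (∀ g : G, g ≠ 1 → ∃! H : Subgroup G, IsMaxAbelian H ∧ g ∈ H) ∧
    (∀ H K : Subgroup G, IsMaxAbelian H → IsMaxAbelian K → H ≠ K →
      H ⊓ K = ⊥) := by
  have hT := IsCommTransitive.of_center_eq_bot hZ hCT
  refine ⟨fun g hg => ⟨Subgroup.centralizer {g}, ⟨hT.centralizer_singleton_isMaxAbelian hg,
    Subgroup.mem_centralizer_singleton_iff.mpr rfl⟩,
    fun H ⟨hH, hgH⟩ => hT.eq_centralizer_of_isMaxAbelian hg hH hgH⟩, ?_⟩
  intro H K hH hK hne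
  rw [Subgroup.eq_bot_iff_forall]
  intro g ⟨hgH, hgK⟩
  by_contra hg
  exact hne ((hT.eq_centralizer_of_isMaxAbelian hg hH hgH).trans
    (hT.eq_centralizer_of_isMaxAbelian hg hK hgK).symm)

/-- In a finite CT group with trivial center, every nontrivial element lies
in exactly one maximal abelian subgroup, and two distinct maximal abelian
subgroups intersect trivially. -/
theorem stmt14 (G : Type) [Group G] [Finite G] (hZ : Subgroup.center G = ⊥)
    (hCT : ∀ a b c : G, a ∉ Subgroup.center G → b ∉ Subgroup.center G →
      c ∉ Subgroup.center G → ⁅a, b⁆ = 1 → ⁅b, c⁆ = 1 → ⁅a, c⁆ = 1) :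
    (∀ g : G, g ≠ 1 → ∃! H : Subgroup G, IsMaxAbelian H ∧ g ∈ H) ∧
    (∀ H K : Subgroup G, IsMaxAbelian H → IsMaxAbelian K → H ≠ K →
      H ⊓ K = ⊥) :=
  stmt14_general G hZ hCT
end

section
/- Let C_n and C_m be finite cyclic groups of orders n, m ≥ 2. The kernel of the canonical surjection C_n * C_m → C_n × C_m equals the commutator subgroup [C_n * C_m, C_n * C_m], and it is a free group of rank (n−1)(m−1). -/
/-!
Reidemeister–Schreier for the transversal `{b^j a^i}` of `K = ker (C_n ∗ C_m → C_n × C_m)`,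
made explicit. Let `F` be free on `x_{k,j}` (`0 ≤ k < n - 1`, `0 < j < m`), put `x_{k,0} = 1`
and `d_{i,j} = x_{i-1,j} ⋯ x_{0,j}`. Then `b` acts on `F × (C_n × C_m)` by translating `j`,
and `a` by the translation of `i` conjugated by `(w, t) ↦ (d_t w, t)`, i.e. by
`(w, (i,j)) ↦ (d_{i+1,j} d_{i,j}⁻¹ w, (i+1,j))`. The `F`-component of `g • (1, t)` is a
cocycle, hence a homomorphism `K → F` at `t = 1`. Conversely
`ψ : F → C_n ∗ C_m`, `x_{k,j} ↦ [a^{-(k+1)}, b^{-j}] [a^{-k}, b^{-j}]⁻¹`, lands in the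
commutator subgroup and telescopes to `ψ d_{i,j} = [a^{-i}, b^{-j}]`, which gives
`g b^j a^i = b^{j'} a^{i'} ψ(cocycle)`. So the two maps are inverse, and
`K = ψ F ≤ [G, G] ≤ K`.
-/

namespace CoprodZMod

open Monoid.Coprod Multiplicative
open scoped commutatorElement

variable {n m : ℕ}

local notation "G" => Monoid.Coprod (Multiplicative (ZMod n)) (Multiplicative (ZMod m))
local notation "H" => Multiplicative (ZMod n) × Multiplicative (ZMod m)
local notation "F" => FreeGroup (Fin (n - 1) × Fin (m - 1))

def commutatorPair (i : Multiplicative (ZMod n)) (j : Multiplicative (ZMod m)) : G :=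
  ⁅(inl i⁻¹ : G), inr j⁻¹⁆

def transversal (t : H) : G := inr t.2 * inl t.1

lemma transversal_mul_commutatorPair (i : Multiplicative (ZMod n)) (j : Multiplicative (ZMod m)) :
    transversal (i, j) * commutatorPair i j = inl i * inr j := by
  simp [transversal, commutatorPair, commutatorElement_def, mul_assoc]

lemma commutatorPair_one_left (j : Multiplicative (ZMod m)) :
    commutatorPair (1 : Multiplicative (ZMod n)) j = 1 := by
  simp [commutatorPair]

lemma commutatorPair_one_right (i : Multiplicative (ZMod n)) :
    commutatorPair i (1 : Multiplicative (ZMod m)) = 1 := by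
  simp [commutatorPair]

lemma commutatorPair_mem_commutator (i : Multiplicative (ZMod n)) (j : Multiplicative (ZMod m)) :
    commutatorPair i j ∈ commutator G :=
  Subgroup.commutator_mem_commutator (Subgroup.mem_top _) (Subgroup.mem_top _)

def genImage (s : Fin (n - 1) × Fin (m - 1)) : G :=
  commutatorPair (ofAdd ((s.1 + 1 : ℕ) : ZMod n)) (ofAdd ((s.2 + 1 : ℕ) : ZMod m)) *
    (commutatorPair (ofAdd ((s.1 : ℕ) : ZMod n)) (ofAdd ((s.2 + 1 : ℕ) : ZMod m)))⁻¹

def ofFree : F →* G := FreeGroup.lift genImage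

lemma range_ofFree_le_commutator : (ofFree : F →* G).range ≤ commutator G := by
  rw [ofFree, FreeGroup.range_lift_eq_closure, Subgroup.closure_le]
  rintro _ ⟨s, rfl⟩
  exact mul_mem (commutatorPair_mem_commutator _ _) (inv_mem (commutatorPair_mem_commutator _ _))

def translate : H →* Equiv.Perm (F × H) where
  toFun s := Equiv.prodCongr (Equiv.refl F) (Equiv.mulRight s)
  map_one' := by ext <;> simp
  map_mul' s s' := by ext <;> simp [mul_assoc, mul_comm s s']

variable [NeZero m]

variable (n) in
/-- The free generator `x_{k,j}` with `x_{k,0} = 1`; also `1` (a junk value) for `k ≥ n - 1`. -/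
def gen (k : ℕ) (j : ZMod m) : F :=
  if h : k < n - 1 ∧ j.val ≠ 0 then
    FreeGroup.of (⟨k, h.1⟩, ⟨j.val - 1, by have := j.val_lt; omega⟩)
  else 1

variable (n) in
def wordNat : ℕ → ZMod m → F
  | 0, _ => 1
  | k + 1, j => gen n k j * wordNat k j

def word (i : Multiplicative (ZMod n)) (j : Multiplicative (ZMod m)) : F :=
  wordNat n i.toAdd.val j.toAdd

lemma word_one_left (j : Multiplicative (ZMod m)) : word (1 : Multiplicative (ZMod n)) j = 1 := by
  simp [word, wordNat]

lemma word_one_right (i : Multiplicative (ZMod n)) : word i (1 : Multiplicative (ZMod m)) = 1 := by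
  rw [word, toAdd_one]
  induction i.toAdd.val with
  | zero => rfl
  | succ k ih => simp [wordNat, ih, gen]

def twist : Equiv.Perm (F × H) where
  toFun p := (word p.2.1 p.2.2 * p.1, p.2)
  invFun p := ((word p.2.1 p.2.2)⁻¹ * p.1, p.2)
  left_inv p := by simp
  right_inv p := by simp

/-- Conjugating the translation by `twist` (rather than writing the action of `a` down directly)
makes the relation `a ^ n = 1` automatic. -/
def action : G →* Equiv.Perm (F × H) :=
  lift ((MulAut.conj twist).toMonoidHom.comp (translate.comp (.inl _ _)))
    (translate.comp (.inr _ _))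

lemma action_inl (u : Multiplicative (ZMod n)) (w : F) (i : Multiplicative (ZMod n))
    (j : Multiplicative (ZMod m)) :
    action (inl u) (w, (i, j)) = (word (i * u) j * (word i j)⁻¹ * w, (i * u, j)) := by
  simp [action, twist, translate, mul_assoc]

lemma action_inr (v : Multiplicative (ZMod m)) (w : F) (t : H) :
    action (inr v : G) (w, t) = (w, t * (1, v)) := by
  simp [action, translate]

lemma action_apply (g : G) (w : F) (t : H) :
    action g (w, t) = ((action g (1, t)).1 * w, t * toProd g) := by
  induction g using Monoid.Coprod.induction_on generalizing w t with
  | inl u => obtain ⟨i, j⟩ := t; simp [action_inl]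
  | inr v => simp [action_inr]
  | mul g₁ g₂ ih₁ ih₂ =>
    rw [map_mul, Equiv.Perm.mul_apply, Equiv.Perm.mul_apply, ih₂, ih₂ 1, ih₁, ih₁ (_ * 1)]
    simp [mul_assoc, mul_comm (toProd g₁)]

lemma action_commutatorPair (i : Multiplicative (ZMod n)) (j : Multiplicative (ZMod m)) (w : F) :
    action (commutatorPair i j) (w, 1) = (word i j * w, 1) := by
  rw [commutatorPair, commutatorElement_def, ← map_inv, ← map_inv, inv_inv, inv_inv]
  simp only [map_mul, Equiv.Perm.mul_apply]
  simp [action_inl, action_inr, word_one_left, word_one_right, -map_inv]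

def cocycle (g : G) (t : H) : F := (action g (1, t)).1

lemma cocycle_mul (g₁ g₂ : G) (t : H) :
    cocycle (g₁ * g₂) t = cocycle g₁ (t * toProd g₂) * cocycle g₂ t := by
  rw [cocycle, map_mul, Equiv.Perm.mul_apply, action_apply g₂, mul_one, action_apply g₁]
  rfl

lemma cocycle_inl (u i : Multiplicative (ZMod n)) (j : Multiplicative (ZMod m)) :
    cocycle (inl u : G) (i, j) = word (i * u) j * (word i j)⁻¹ := by
  rw [cocycle, action_inl, mul_one]

lemma cocycle_inr (v : Multiplicative (ZMod m)) (t : H) : cocycle (inr v : G) t = 1 := by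
  rw [cocycle, action_inr]

lemma ofFree_gen {k : ℕ} (hk : k < n - 1) (j : ZMod m) :
    ofFree (gen n k j) = commutatorPair (ofAdd ((k + 1 : ℕ) : ZMod n)) (ofAdd j) *
      (commutatorPair (ofAdd (k : ZMod n)) (ofAdd j))⁻¹ := by
  by_cases hj : j.val = 0
  · rw [ZMod.val_eq_zero] at hj
    simp [gen, hj, commutatorPair_one_right]
  · have hj' : (((j.val - 1 : ℕ) + 1 : ℕ) : ZMod m) = j := by
      rw [Nat.sub_add_cancel (Nat.one_le_iff_ne_zero.mpr hj), ZMod.natCast_zmod_val]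
    rw [gen, dif_pos ⟨hk, hj⟩, ofFree, FreeGroup.lift_apply_of, genImage, hj']

lemma ofFree_wordNat (j : ZMod m) {k : ℕ} (hk : k ≤ n - 1) :
    ofFree (wordNat n k j) = commutatorPair (ofAdd (k : ZMod n)) (ofAdd j) := by
  induction k with
  | zero => simp [wordNat, commutatorPair_one_left]
  | succ k ih => rw [wordNat, map_mul, ofFree_gen (by omega), ih (by omega), inv_mul_cancel_right]

lemma ofFree_word [NeZero n] (i : Multiplicative (ZMod n)) (j : Multiplicative (ZMod m)) :
    ofFree (word i j) = commutatorPair i j := by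
  rw [word, ofFree_wordNat _ (Nat.le_sub_one_of_lt i.toAdd.val_lt), ZMod.natCast_zmod_val]
  rfl

lemma mul_transversal [NeZero n] (g : G) (t : H) :
    g * transversal t = transversal (t * toProd g) * ofFree (cocycle g t) := by
  induction g using Monoid.Coprod.induction_on generalizing t with
  | inl u =>
    obtain ⟨i, j⟩ := t
    have hp : ((i, j) : H) * toProd (inl u : G) = (i * u, j) := by simp
    rw [cocycle_inl, hp, map_mul, map_inv, ofFree_word, ofFree_word, ← mul_assoc,
      transversal_mul_commutatorPair, eq_mul_inv_iff_mul_eq, mul_assoc,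
      transversal_mul_commutatorPair, mul_comm i, map_mul, mul_assoc]
  | inr v =>
    simp [transversal, cocycle_inr, mul_comm t.2 v, mul_assoc]
  | mul g₁ g₂ ih₁ ih₂ =>
    rw [mul_assoc, ih₂, ← mul_assoc, ih₁, cocycle_mul, map_mul, map_mul, mul_assoc,
      mul_comm (toProd g₁), mul_assoc]

lemma ofFree_cocycle_one [NeZero n] {g : G} (hg : toProd g = 1) : ofFree (cocycle g 1) = g := by
  simpa [hg, transversal] using (mul_transversal g 1).symm

theorem ker_toProd_eq_commutator [NeZero n] : (toProd : G →* H).ker = commutator G :=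
  le_antisymm (fun _ hg => ofFree_cocycle_one hg ▸ range_ofFree_le_commutator ⟨_, rfl⟩)
    (Abelianization.commutator_subset_ker _)

def cocycleHom : (toProd : G →* H).ker →* F where
  toFun g := cocycle g 1
  map_one' := by simp [cocycle]
  map_mul' g₁ g₂ := by rw [Subgroup.coe_mul, cocycle_mul, MonoidHom.mem_ker.mp g₂.2, one_mul]

lemma word_succ_mul_inv_word (s : Fin (n - 1) × Fin (m - 1)) :
    word (ofAdd ((s.1 + 1 : ℕ) : ZMod n)) (ofAdd ((s.2 + 1 : ℕ) : ZMod m)) *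
      (word (ofAdd ((s.1 : ℕ) : ZMod n)) (ofAdd ((s.2 + 1 : ℕ) : ZMod m)))⁻¹ = .of s := by
  have hj : ((s.2 + 1 : ℕ) : ZMod m).val = s.2 + 1 := ZMod.val_natCast_of_lt (by omega)
  simp only [word, toAdd_ofAdd]
  rw [ZMod.val_natCast_of_lt (by omega), ZMod.val_natCast_of_lt (by omega), wordNat,
    mul_inv_cancel_right, gen, dif_pos ⟨s.1.isLt, by omega⟩]
  exact congrArg _ (Prod.ext rfl (Fin.ext (by simp only [hj, add_tsub_cancel_right])))

lemma cocycle_genImage (s : Fin (n - 1) × Fin (m - 1)) : cocycle (genImage s) 1 = .of s := by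
  have hinv (i : Multiplicative (ZMod n)) (j : Multiplicative (ZMod m)) :
      (action (commutatorPair i j))⁻¹ (1, 1) = ((word i j)⁻¹, 1) := by
    rw [Equiv.Perm.inv_eq_iff_eq, action_commutatorPair, mul_inv_cancel]
  rw [cocycle, genImage, map_mul, map_inv, Equiv.Perm.mul_apply, hinv, action_commutatorPair,
    word_succ_mul_inv_word]

def kerToProdEquiv [NeZero n] : (toProd : G →* H).ker ≃* F :=
  cocycleHom.toMulEquiv
    (ofFree.codRestrict _ fun w =>
      Abelianization.commutator_subset_ker _ (range_ofFree_le_commutator ⟨w, rfl⟩))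
    (by ext g; exact ofFree_cocycle_one g.2)
    (FreeGroup.ext_hom _ _ cocycle_genImage)

end CoprodZMod

/-- The kernel of the canonical surjection `C_n * C_m → C_n × C_m` of cyclic
groups (`n, m ≥ 2`) equals the commutator subgroup of the free product, and
is free of rank `(n−1)(m−1)`. -/
theorem stmt19 (n m : ℕ) (hn : 2 ≤ n) (hm : 2 ≤ m)
    (p : Monoid.Coprod (Multiplicative (ZMod n)) (Multiplicative (ZMod m)) →*
      Multiplicative (ZMod n) × Multiplicative (ZMod m))
    (hp : p = Monoid.Coprod.lift (MonoidHom.inl _ _) (MonoidHom.inr _ _)) :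
    p.ker = commutator
        (Monoid.Coprod (Multiplicative (ZMod n)) (Multiplicative (ZMod m))) ∧
    Nonempty (p.ker ≃* FreeGroup (Fin ((n - 1) * (m - 1)))) := by
  have : NeZero n := ⟨by omega⟩
  have : NeZero m := ⟨by omega⟩
  subst hp
  exact ⟨CoprodZMod.ker_toProd_eq_commutator,
    ⟨CoprodZMod.kerToProdEquiv.trans (FreeGroup.freeGroupCongr finProdFinEquiv)⟩⟩
end
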